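/- arXiv:2403.20020 — 5 statements merged into one kernel-verified Lean document; each statement's English description precedes it below -/
import Mathlib

section
/- Let H be a real Hilbert space, 𝔖 a nonempty set of states with chosen points s_1, …, s_M ∈ 𝔖, 𝔄 a nonempty action set, φ : 𝔖 × 𝔄 → H a feature map, ψ_1, …, ψ_M ∈ H, g ∈ H, and α ≥ 0. For a policy μ : 𝔖 → 𝔄 define T_μ : H → H by T_μ(Q) = g + α · Σ_{i=1}^M ⟨φ(s_i, μ(s_i)), Q⟩ · ψ_i. Let K_Ψ be the M×M Gram matrix with entries ⟨ψ_i, ψ_j⟩, and for each policy μ′ : 𝔖 → 𝔄 let K^{av}_{μ′} be the M×M Gram matrix with entries ⟨φ(s_i, μ′(s_i)), φ(s_j, μ′(s_j))⟩. Suppose B ∈ ℝ satisfies ‖K^{av}_{μ′}‖₂ ≤ B for every policy μ′, where ‖·‖₂ is the matrix spectral norm, and set β := α·√(‖K_Ψ‖₂ · B). Then for all Q₁, Q₂ ∈ H, ‖T_μ(Q₁) − T_μ(Q₂)‖ ≤ β·‖Q₁ − Q₂‖. -/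
/-!
Write `c i = ⟪φ (s i, μ (s i)), Q₁ - Q₂⟫`, so that `T Q₁ - T Q₂ = α • ∑ i, c i • ψ i`.
For any family `h`, `‖∑ i, c i • h i‖² = c ⬝ᵥ gram h *ᵥ c ≤ ‖gram h‖ ∑ i, c i ²`: the synthesis
map `c ↦ ∑ i, c i • h i` has norm at most `√‖gram h‖`. The analysis map `Q ↦ (⟪h i, Q⟫)ᵢ` is its
transpose and obeys the same bound; since `H` need not be complete we get this without adjoints,
from `S = ∑ i, ⟪h i, Q⟫² = ⟪∑ i, ⟪h i, Q⟫ • h i, Q⟫ ≤ √(‖gram h‖ S) ‖Q‖`. Composing the analysis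
map of `φ` with the synthesis map of `ψ` gives the Lipschitz constant `α √(‖K_Ψ‖ B)`.
-/

open scoped RealInnerProductSpace

noncomputable def spectralNorm' {M : ℕ} (K : Matrix (Fin M) (Fin M) ℝ) : ℝ :=
  ‖Matrix.toEuclideanCLM (𝕜 := ℝ) K‖

open Matrix

lemma spectralNorm'_nonneg {M : ℕ} (K : Matrix (Fin M) (Fin M) ℝ) : 0 ≤ spectralNorm' K :=
  norm_nonneg _

lemma dotProduct_mulVec_le_spectralNorm' {M : ℕ} (K : Matrix (Fin M) (Fin M) ℝ)
    (c : Fin M → ℝ) : c ⬝ᵥ K *ᵥ c ≤ spectralNorm' K * ∑ i, c i ^ 2 := by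
  set x : EuclideanSpace ℝ (Fin M) := WithLp.toLp 2 c
  calc c ⬝ᵥ K *ᵥ c = ⟪x, toEuclideanCLM (𝕜 := ℝ) K x⟫ := (inner_toEuclideanCLM K x x).symm
    _ ≤ ‖x‖ * (spectralNorm' K * ‖x‖) :=
      (real_inner_le_norm _ _).trans (by gcongr; exact (toEuclideanCLM (𝕜 := ℝ) K).le_opNorm x)
    _ = spectralNorm' K * ∑ i, c i ^ 2 := by
      rw [← EuclideanSpace.real_norm_sq_eq x]; ring

section GramBounds

variable {H : Type*} [NormedAddCommGroup H] [InnerProductSpace ℝ H] {M : ℕ}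

lemma norm_sum_smul_sq_le (h : Fin M → H) (c : Fin M → ℝ) :
    ‖∑ i, c i • h i‖ ^ 2 ≤ spectralNorm' (gram ℝ h) * ∑ i, c i ^ 2 := by
  rw [← real_inner_self_eq_norm_sq, ← star_dotProduct_gram_mulVec, star_trivial]
  exact dotProduct_mulVec_le_spectralNorm' _ c

lemma sum_inner_sq_le (h : Fin M → H) (Q : H) :
    ∑ i, ⟪h i, Q⟫ ^ 2 ≤ spectralNorm' (gram ℝ h) * ‖Q‖ ^ 2 := by
  set c := fun i => ⟪h i, Q⟫
  set S := ∑ i, c i ^ 2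
  have hS_nonneg : 0 ≤ S := Finset.sum_nonneg fun i _ => sq_nonneg (c i)
  have hS_le : S ≤ ‖∑ i, c i • h i‖ * ‖Q‖ := calc
    S = ⟪∑ i, c i • h i, Q⟫ := by simp only [S, sum_inner, real_inner_smul_left, sq, c]
    _ ≤ ‖∑ i, c i • h i‖ * ‖Q‖ := real_inner_le_norm _ _
  have hS_sq : S * S ≤ S * (spectralNorm' (gram ℝ h) * ‖Q‖ ^ 2) := calc
    S * S ≤ ‖∑ i, c i • h i‖ ^ 2 * ‖Q‖ ^ 2 := by rw [← mul_pow, ← sq]; gcongr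
    _ ≤ spectralNorm' (gram ℝ h) * S * ‖Q‖ ^ 2 := by gcongr; exact norm_sum_smul_sq_le h c
    _ = S * (spectralNorm' (gram ℝ h) * ‖Q‖ ^ 2) := by ring
  rcases hS_nonneg.eq_or_lt with hS0 | hS0
  · rw [← hS0]; exact mul_nonneg (spectralNorm'_nonneg _) (sq_nonneg _)
  · exact le_of_mul_le_mul_left hS_sq hS0

lemma norm_sum_inner_smul_le (h k : Fin M → H) (Q : H) :
    ‖∑ i, ⟪h i, Q⟫ • k i‖ ≤ √(spectralNorm' (gram ℝ k) * spectralNorm' (gram ℝ h)) * ‖Q‖ := by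
  rw [← Real.sqrt_sq (norm_nonneg Q), ← Real.sqrt_mul' _ (sq_nonneg _)]
  apply Real.le_sqrt_of_sq_le
  calc ‖∑ i, ⟪h i, Q⟫ • k i‖ ^ 2 ≤ spectralNorm' (gram ℝ k) * ∑ i, ⟪h i, Q⟫ ^ 2 :=
        norm_sum_smul_sq_le k _
    _ ≤ spectralNorm' (gram ℝ k) * (spectralNorm' (gram ℝ h) * ‖Q‖ ^ 2) := by
        gcongr
        · exact spectralNorm'_nonneg _
        · exact sum_inner_sq_le h Q
    _ = _ := by ring

end GramBounds

theorem stmt0_general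
    {H : Type*} [NormedAddCommGroup H] [InnerProductSpace ℝ H]
    {𝔖 𝔄 : Type*}
    {M : ℕ} (s : Fin M → 𝔖) (φ : 𝔖 × 𝔄 → H) (ψ : Fin M → H)
    (g : H) (α : ℝ) (hα : 0 ≤ α)
    (μ : 𝔖 → 𝔄)
    (T : H → H)
    (hT : ∀ Q : H, T Q = g + α • ∑ i, ⟪φ (s i, μ (s i)), Q⟫ • ψ i)
    (KΨ : Matrix (Fin M) (Fin M) ℝ)
    (hKΨ : ∀ i j, KΨ i j = ⟪ψ i, ψ j⟫)
    (Kav : (𝔖 → 𝔄) → Matrix (Fin M) (Fin M) ℝ)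
    (hKav : ∀ (μ' : 𝔖 → 𝔄) i j,
      Kav μ' i j = ⟪φ (s i, μ' (s i)), φ (s j, μ' (s j))⟫)
    (B : ℝ) (hB : ∀ μ' : 𝔖 → 𝔄, spectralNorm' (Kav μ') ≤ B)
    (β : ℝ) (hβ : β = α * Real.sqrt (spectralNorm' KΨ * B)) :
    ∀ Q₁ Q₂ : H, ‖T Q₁ - T Q₂‖ ≤ β * ‖Q₁ - Q₂‖ := by
  intro Q₁ Q₂
  have hKΨ_gram : KΨ = gram ℝ ψ := Matrix.ext hKΨ
  have hKav_gram : Kav μ = gram ℝ (fun i => φ (s i, μ (s i))) := Matrix.ext (hKav μ)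
  have hT_sub : T Q₁ - T Q₂ = α • ∑ i, ⟪φ (s i, μ (s i)), Q₁ - Q₂⟫ • ψ i := by
    simp only [hT, add_sub_add_left_eq_sub, ← smul_sub, ← Finset.sum_sub_distrib, inner_sub_right,
      sub_smul]
  calc ‖T Q₁ - T Q₂‖
      ≤ α * (√(spectralNorm' KΨ * spectralNorm' (Kav μ)) * ‖Q₁ - Q₂‖) := by
        rw [hT_sub, norm_smul, Real.norm_of_nonneg hα, hKΨ_gram, hKav_gram]
        gcongr
        exact norm_sum_inner_smul_le _ _ _
    _ ≤ β * ‖Q₁ - Q₂‖ := by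
        rw [hβ, mul_assoc]
        gcongr
        · exact spectralNorm'_nonneg _
        · exact hB μ

/-- Lipschitz continuity of the proposed Bellman map `T_μ`. -/
theorem stmt0
    {H : Type*} [NormedAddCommGroup H] [InnerProductSpace ℝ H]
    {𝔖 𝔄 : Type*} [Nonempty 𝔖] [Nonempty 𝔄]
    {M : ℕ} (s : Fin M → 𝔖) (φ : 𝔖 × 𝔄 → H) (ψ : Fin M → H)
    (g : H) (α : ℝ) (hα : 0 ≤ α)
    (μ : 𝔖 → 𝔄)
    (T : H → H)
    (hT : ∀ Q : H, T Q = g + α • ∑ i, ⟪φ (s i, μ (s i)), Q⟫ • ψ i)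
    (KΨ : Matrix (Fin M) (Fin M) ℝ)
    (hKΨ : ∀ i j, KΨ i j = ⟪ψ i, ψ j⟫)
    (Kav : (𝔖 → 𝔄) → Matrix (Fin M) (Fin M) ℝ)
    (hKav : ∀ (μ' : 𝔖 → 𝔄) i j,
      Kav μ' i j = ⟪φ (s i, μ' (s i)), φ (s j, μ' (s j))⟫)
    (B : ℝ) (hB : ∀ μ' : 𝔖 → 𝔄, spectralNorm' (Kav μ') ≤ B)
    (β : ℝ) (hβ : β = α * Real.sqrt (spectralNorm' KΨ * B)) :
    ∀ Q₁ Q₂ : H, ‖T Q₁ - T Q₂‖ ≤ β * ‖Q₁ - Q₂‖ :=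
  stmt0_general s φ ψ g α hα μ T hT KΨ hKΨ Kav hKav B hB β hβ
end

section
/- Let H be a real Hilbert space, 𝔖 a nonempty set of states with chosen points s_1, …, s_M ∈ 𝔖, 𝔄 a nonempty action set, φ : 𝔖 × 𝔄 → H a feature map, ψ_1, …, ψ_M ∈ H, g ∈ H, and α ≥ 0. Assume that for each i ∈ {1,…,M} the set {φ(s_i, a) : a ∈ 𝔄} is norm-bounded in H, and define T : H → H by T(Q) = g + α · Σ_{i=1}^M (inf_{a ∈ 𝔄} ⟨φ(s_i, a), Q⟩) · ψ_i. Let K_Ψ be the M×M Gram matrix with entries ⟨ψ_i, ψ_j⟩, and for each policy μ′ : 𝔖 → 𝔄 let K^{av}_{μ′} be the M×M Gram matrix with entries ⟨φ(s_i, μ′(s_i)), φ(s_j, μ′(s_j))⟩. Suppose B ∈ ℝ satisfies ‖K^{av}_{μ′}‖₂ ≤ B for every policy μ′, where ‖·‖₂ is the matrix spectral norm, and set β := α·√(‖K_Ψ‖₂ · B). Then for all Q₁, Q₂ ∈ H, ‖T(Q₁) − T(Q₂)‖ ≤ β·‖Q₁ − Q₂‖. -/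
open scoped RealInnerProductSpace

lemma inner_gram_eq {H : Type*} [NormedAddCommGroup H] [InnerProductSpace ℝ H] {M : ℕ}
    (h : Fin M → H) (K : Matrix (Fin M) (Fin M) ℝ)
    (hK : ∀ i j, K i j = ⟪h i, h j⟫) (c : EuclideanSpace ℝ (Fin M)) :
    ⟪c, Matrix.toEuclideanCLM (𝕜 := ℝ) K c⟫ = ‖∑ i, c i • h i‖ ^ 2 := by
  have hLc : ∀ i, (Matrix.toEuclideanCLM (𝕜 := ℝ) K c) i = ∑ j, K i j * c j := by
    intro i
    have := congrFun (Matrix.ofLp_toEuclideanCLM K c) i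
    simpa [Matrix.toLin'_apply, Matrix.mulVec, dotProduct] using this
  have h1 : ⟪c, Matrix.toEuclideanCLM (𝕜 := ℝ) K c⟫ = ∑ i, ∑ j, c i * c j * ⟪h i, h j⟫ := by
    simp only [PiLp.inner_apply, RCLike.inner_apply, conj_trivial, hLc, hK,
      Finset.mul_sum]
    congr 1; ext i; rw [Finset.sum_mul]; congr 1; ext j; ring
  have h2 : (‖∑ i, c i • h i‖ : ℝ) ^ 2 = ∑ i, ∑ j, c i * c j * ⟪h i, h j⟫ := by
    rw [← real_inner_self_eq_norm_sq, sum_inner]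
    congr 1; ext i
    rw [inner_sum]
    congr 1; ext j
    rw [real_inner_smul_left, real_inner_smul_right]; ring
  rw [h1, h2]

lemma gram_quad {H : Type*} [NormedAddCommGroup H] [InnerProductSpace ℝ H] {M : ℕ}
    (h : Fin M → H) (K : Matrix (Fin M) (Fin M) ℝ)
    (hK : ∀ i j, K i j = ⟪h i, h j⟫) (c : EuclideanSpace ℝ (Fin M)) :
    ‖∑ i, c i • h i‖ ^ 2 ≤ spectralNorm' K * ‖c‖ ^ 2 := by
  rw [← inner_gram_eq h K hK c]
  calc ⟪c, Matrix.toEuclideanCLM (𝕜 := ℝ) K c⟫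
      ≤ ‖c‖ * ‖Matrix.toEuclideanCLM (𝕜 := ℝ) K c‖ := real_inner_le_norm _ _
    _ ≤ ‖c‖ * (spectralNorm' K * ‖c‖) := by
        gcongr; exact (Matrix.toEuclideanCLM (𝕜 := ℝ) K).le_opNorm c
    _ = spectralNorm' K * ‖c‖ ^ 2 := by ring

lemma norm_smul_sum_le {H : Type*} [NormedAddCommGroup H] [InnerProductSpace ℝ H] {M : ℕ}
    (h : Fin M → H) (K : Matrix (Fin M) (Fin M) ℝ)
    (hK : ∀ i j, K i j = ⟪h i, h j⟫) (c : EuclideanSpace ℝ (Fin M)) :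
    ‖∑ i, c i • h i‖ ≤ Real.sqrt (spectralNorm' K) * ‖c‖ := by
  have h0 : (0:ℝ) ≤ spectralNorm' K := norm_nonneg _
  have := gram_quad h K hK c
  calc ‖∑ i, c i • h i‖ = Real.sqrt (‖∑ i, c i • h i‖ ^ 2) := by
        rw [Real.sqrt_sq (norm_nonneg _)]
    _ ≤ Real.sqrt (spectralNorm' K * ‖c‖ ^ 2) := Real.sqrt_le_sqrt this
    _ = Real.sqrt (spectralNorm' K) * ‖c‖ := by
        rw [Real.sqrt_mul h0, Real.sqrt_sq (norm_nonneg _)]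

lemma gram_dual {H : Type*} [NormedAddCommGroup H] [InnerProductSpace ℝ H] {M : ℕ}
    (h : Fin M → H) (K : Matrix (Fin M) (Fin M) ℝ)
    (hK : ∀ i j, K i j = ⟪h i, h j⟫) (d : H) :
    ‖((WithLp.equiv 2 (Fin M → ℝ)).symm fun i => ⟪h i, d⟫)‖
      ≤ Real.sqrt (spectralNorm' K) * ‖d‖ := by
  set v : EuclideanSpace ℝ (Fin M) := (WithLp.equiv 2 (Fin M → ℝ)).symm fun i => ⟪h i, d⟫ with hv
  have hvi : ∀ i, v i = ⟪h i, d⟫ := fun i => rfl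
  have hw : ⟪∑ i, v i • h i, d⟫ = ‖v‖ ^ 2 := by
    rw [sum_inner, ← real_inner_self_eq_norm_sq]
    simp only [PiLp.inner_apply, RCLike.inner_apply, conj_trivial, hvi,
      real_inner_smul_left]
  have key : ‖v‖ ^ 2 ≤ (Real.sqrt (spectralNorm' K) * ‖d‖) * ‖v‖ := by
    calc ‖v‖ ^ 2 = ⟪∑ i, v i • h i, d⟫ := hw.symm
      _ ≤ ‖∑ i, v i • h i‖ * ‖d‖ := real_inner_le_norm _ _
      _ ≤ (Real.sqrt (spectralNorm' K) * ‖v‖) * ‖d‖ := by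
          gcongr; exact norm_smul_sum_le h K hK v
      _ = (Real.sqrt (spectralNorm' K) * ‖d‖) * ‖v‖ := by ring
  rcases eq_or_lt_of_le (norm_nonneg v) with h0 | h0
  · rw [← h0]; positivity
  · nlinarith [key]

/-- Lipschitz continuity of the proposed "greedy" Bellman map `T`. -/
theorem stmt1
    {H : Type*} [NormedAddCommGroup H] [InnerProductSpace ℝ H]
    {𝔖 𝔄 : Type*} [Nonempty 𝔖] [Nonempty 𝔄]
    {M : ℕ} (s : Fin M → 𝔖) (φ : 𝔖 × 𝔄 → H) (ψ : Fin M → H)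
    (g : H) (α : ℝ) (hα : 0 ≤ α)
    (hbdd : ∀ i : Fin M, ∃ C : ℝ, ∀ a : 𝔄, ‖φ (s i, a)‖ ≤ C)
    (T : H → H)
    (hT : ∀ Q : H, T Q = g + α • ∑ i, (⨅ a : 𝔄, ⟪φ (s i, a), Q⟫) • ψ i)
    (KΨ : Matrix (Fin M) (Fin M) ℝ)
    (hKΨ : ∀ i j, KΨ i j = ⟪ψ i, ψ j⟫)
    (Kav : (𝔖 → 𝔄) → Matrix (Fin M) (Fin M) ℝ)
    (hKav : ∀ (μ' : 𝔖 → 𝔄) i j,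
      Kav μ' i j = ⟪φ (s i, μ' (s i)), φ (s j, μ' (s j))⟫)
    (B : ℝ) (hB : ∀ μ' : 𝔖 → 𝔄, spectralNorm' (Kav μ') ≤ B)
    (β : ℝ) (hβ : β = α * Real.sqrt (spectralNorm' KΨ * B)) :
    ∀ Q₁ Q₂ : H, ‖T Q₁ - T Q₂‖ ≤ β * ‖Q₁ - Q₂‖ := by
  intro Q₁ Q₂
  set d := Q₁ - Q₂ with hd
  set F : 𝔖 → ℝ :=
    fun t => (⨅ a : 𝔄, ⟪φ (t, a), Q₁⟫) - (⨅ a : 𝔄, ⟪φ (t, a), Q₂⟫) with hF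
  have hdiff : T Q₁ - T Q₂ = α • ∑ i, F (s i) • ψ i := by
    rw [hT, hT, add_sub_add_left_eq_sub, ← smul_sub, ← Finset.sum_sub_distrib]
    congr 1
    refine Finset.sum_congr rfl fun i _ => ?_
    rw [← sub_smul]
  set cv : EuclideanSpace ℝ (Fin M) :=
    (WithLp.equiv 2 (Fin M → ℝ)).symm (fun i => F (s i)) with hcvdef
  -- the key bound on the coefficient vector
  have hcv : ‖cv‖ ≤ Real.sqrt B * ‖d‖ := by
    refine le_of_forall_pos_le_add fun ε hε => ?_
    set ε' : ℝ := ε / (Real.sqrt M + 1) with hε'def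
    have hM1 : (0:ℝ) < Real.sqrt M + 1 := by positivity
    have hε' : 0 < ε' := div_pos hε hM1
    have claim : ∀ t : 𝔖, ∃ a : 𝔄,
        (∃ i, s i = t) → |F t| ≤ |⟪φ (t, a), d⟫| + ε' := by
      intro t
      by_cases ht : ∃ i, s i = t
      · obtain ⟨i, hi⟩ := ht
        subst hi
        obtain ⟨C, hC⟩ := hbdd i
        have hbb : ∀ Q : H, BddBelow (Set.range fun a : 𝔄 => ⟪φ (s i, a), Q⟫) := by
          intro Q
          refine ⟨-(C * ‖Q‖), ?_⟩
          rintro x ⟨a, rfl⟩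
          have h1 : |⟪φ (s i, a), Q⟫| ≤ ‖φ (s i, a)‖ * ‖Q‖ := abs_real_inner_le_norm _ _
          have h2 : ‖φ (s i, a)‖ * ‖Q‖ ≤ C * ‖Q‖ := by
            gcongr; exact hC a
          nlinarith [neg_abs_le (⟪φ (s i, a), Q⟫ : ℝ)]
        have hinner : ∀ a : 𝔄, ⟪φ (s i, a), Q₁⟫ - ⟪φ (s i, a), Q₂⟫ = ⟪φ (s i, a), d⟫ := by
          intro a; rw [hd, inner_sub_right]
        rcases le_or_gt 0 (F (s i)) with hFpos | hFneg
        · obtain ⟨a₂, ha₂⟩ := exists_lt_of_ciInf_lt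
            (show (⨅ a : 𝔄, ⟪φ (s i, a), Q₂⟫) < (⨅ a : 𝔄, ⟪φ (s i, a), Q₂⟫) + ε' by
              linarith)
          refine ⟨a₂, fun _ => ?_⟩
          have h1 : (⨅ a : 𝔄, ⟪φ (s i, a), Q₁⟫) ≤ ⟪φ (s i, a₂), Q₁⟫ :=
            ciInf_le (hbb Q₁) a₂
          have habs : F (s i) ≤ ⟪φ (s i, a₂), d⟫ + ε' := by
            rw [hF]; simp only [← hinner a₂]; linarith
          rw [abs_of_nonneg hFpos]
          calc F (s i) ≤ ⟪φ (s i, a₂), d⟫ + ε' := habs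
            _ ≤ |⟪φ (s i, a₂), d⟫| + ε' := by linarith [le_abs_self (⟪φ (s i, a₂), d⟫ : ℝ)]
        · obtain ⟨a₁, ha₁⟩ := exists_lt_of_ciInf_lt
            (show (⨅ a : 𝔄, ⟪φ (s i, a), Q₁⟫) < (⨅ a : 𝔄, ⟪φ (s i, a), Q₁⟫) + ε' by
              linarith)
          refine ⟨a₁, fun _ => ?_⟩
          have h1 : (⨅ a : 𝔄, ⟪φ (s i, a), Q₂⟫) ≤ ⟪φ (s i, a₁), Q₂⟫ :=
            ciInf_le (hbb Q₂) a₁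
          have habs : -F (s i) ≤ -⟪φ (s i, a₁), d⟫ + ε' := by
            rw [hF]; simp only [← hinner a₁]; linarith
          rw [abs_of_neg hFneg]
          calc -F (s i) ≤ -⟪φ (s i, a₁), d⟫ + ε' := habs
            _ ≤ |⟪φ (s i, a₁), d⟫| + ε' := by linarith [neg_abs_le (⟪φ (s i, a₁), d⟫ : ℝ)]
      · exact ⟨Classical.arbitrary 𝔄, fun h => absurd h ht⟩
    choose μ' hμ' using claim
    set w : EuclideanSpace ℝ (Fin M) :=
      (WithLp.equiv 2 (Fin M → ℝ)).symm (fun i => ⟪φ (s i, μ' (s i)), d⟫) with hwdef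
    set w2 : EuclideanSpace ℝ (Fin M) :=
      (WithLp.equiv 2 (Fin M → ℝ)).symm (fun i => |⟪φ (s i, μ' (s i)), d⟫|) with hw2def
    set e : EuclideanSpace ℝ (Fin M) :=
      (WithLp.equiv 2 (Fin M → ℝ)).symm (fun _ => ε') with hedef
    have hwB : ‖w‖ ≤ Real.sqrt B * ‖d‖ := by
      have h1 := gram_dual (fun i => φ (s i, μ' (s i))) (Kav μ')
        (fun i j => hKav μ' i j) d
      have h2 : Real.sqrt (spectralNorm' (Kav μ')) ≤ Real.sqrt B :=
        Real.sqrt_le_sqrt (hB μ')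
      calc ‖w‖ ≤ Real.sqrt (spectralNorm' (Kav μ')) * ‖d‖ := h1
        _ ≤ Real.sqrt B * ‖d‖ := by gcongr
    have hcu : ‖cv‖ ≤ ‖w2 + e‖ := by
      rw [EuclideanSpace.norm_eq, EuclideanSpace.norm_eq]
      apply Real.sqrt_le_sqrt
      apply Finset.sum_le_sum
      intro i _
      have hci : cv i = F (s i) := rfl
      have hui : (w2 + e) i = |⟪φ (s i, μ' (s i)), d⟫| + ε' := rfl
      rw [hci, hui, Real.norm_eq_abs, Real.norm_eq_abs]
      have hb := hμ' (s i) ⟨i, rfl⟩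
      have hnn : (0:ℝ) ≤ |⟪φ (s i, μ' (s i)), d⟫| + ε' := by positivity
      rw [abs_of_nonneg hnn]
      exact pow_le_pow_left₀ (abs_nonneg _) hb 2
    have hw2 : ‖w2‖ = ‖w‖ := by
      rw [EuclideanSpace.norm_eq, EuclideanSpace.norm_eq]
      congr 1
      refine Finset.sum_congr rfl fun i _ => ?_
      rw [show w2 i = |w i| from rfl, Real.norm_eq_abs, Real.norm_eq_abs, abs_abs]
    have he : ‖e‖ ≤ ε := by
      rw [EuclideanSpace.norm_eq]
      have hsum0 : ∑ i : Fin M, ‖e i‖ ^ 2 = (M : ℝ) * ε' ^ 2 := by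
        have h0 : ∀ i : Fin M, ‖e i‖ ^ 2 = ε' ^ 2 := fun i => by
          rw [show e i = ε' from rfl, Real.norm_eq_abs, sq_abs]
        rw [Finset.sum_congr rfl fun i _ => h0 i, Finset.sum_const,
          Finset.card_univ, Fintype.card_fin, nsmul_eq_mul]
      rw [hsum0, Real.sqrt_mul (Nat.cast_nonneg M), Real.sqrt_sq hε'.le, hε'def]
      have hq : (0:ℝ) ≤ ε / (Real.sqrt M + 1) := div_nonneg hε.le hM1.le
      calc Real.sqrt M * (ε / (Real.sqrt M + 1))
          ≤ (Real.sqrt M + 1) * (ε / (Real.sqrt M + 1)) := by nlinarith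
        _ = ε := by field_simp
    calc ‖cv‖ ≤ ‖w2 + e‖ := hcu
      _ ≤ ‖w2‖ + ‖e‖ := norm_add_le _ _
      _ = ‖w‖ + ‖e‖ := by rw [hw2]
      _ ≤ Real.sqrt B * ‖d‖ + ε := add_le_add hwB he
  -- assemble
  have hsum : ‖∑ i, F (s i) • ψ i‖ ≤ Real.sqrt (spectralNorm' KΨ) * ‖cv‖ :=
    norm_smul_sum_le ψ KΨ hKΨ cv
  have hN : (0:ℝ) ≤ spectralNorm' KΨ := by unfold spectralNorm'; positivity
  rw [hdiff, norm_smul, Real.norm_eq_abs, abs_of_nonneg hα, hβ,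
    Real.sqrt_mul hN]
  calc α * ‖∑ i, F (s i) • ψ i‖
      ≤ α * (Real.sqrt (spectralNorm' KΨ) * ‖cv‖) := by gcongr
    _ ≤ α * (Real.sqrt (spectralNorm' KΨ) * (Real.sqrt B * ‖d‖)) := by
        have := Real.sqrt_nonneg (spectralNorm' KΨ)
        have := mul_le_mul_of_nonneg_left hcv this
        nlinarith
    _ = α * (Real.sqrt (spectralNorm' KΨ) * Real.sqrt B) * ‖d‖ := by ring
end

section
/- Let H be a real normed space, β ∈ (0, 1), and ε, Δ₀, Δ₁, Δ₂ > 0. Let T♢ : H → H be β-Lipschitz with fixed point Q⋆ = T♢(Q⋆). For each n ∈ ℕ let T_n : H → H be β-Lipschitz with fixed point Q♢_n = T_n(Q♢_n), and let (Q_n)_{n∈ℕ} and (Q̂_n)_{n∈ℕ} be sequences in H such that, for every n: ‖Q̂_n − Q♢_n‖ ≤ ε, ‖Q̂_n − Q_n‖ ≤ Δ₀, ‖T_{n+1}(Q_n) − T♢(Q_n)‖ ≤ Δ₁, and ‖T_{n+1}(Q♢_n) − Q♢_n‖ ≤ Δ₂. Then limsup_{n→∞} ‖Q_n − Q⋆‖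 ≤ Δ₃, where Δ₃ := ε + Δ₀ + (2β(Δ₀ + ε) + Δ₁ + Δ₂/(1 − β)) / (1 − β). -/
/-- asymptotic bound on the distance of the estimates from the fixed
point of `T♢`, cf. the policy-iteration performance analysis. -/
theorem stmt13
    {H : Type*} [NormedAddCommGroup H] [NormedSpace ℝ H]
    (β : ℝ) (hβ0 : 0 < β) (hβ1 : β < 1)
    (ε Δ₀ Δ₁ Δ₂ : ℝ) (hε : 0 < ε) (hΔ₀ : 0 < Δ₀) (hΔ₁ : 0 < Δ₁) (hΔ₂ : 0 < Δ₂)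
    (Tdiam : H → H) (hTdiam : ∀ x y : H, ‖Tdiam x - Tdiam y‖ ≤ β * ‖x - y‖)
    (Qstar : H) (hQstar : Tdiam Qstar = Qstar)
    (T : ℕ → H → H) (hT : ∀ n, ∀ x y : H, ‖T n x - T n y‖ ≤ β * ‖x - y‖)
    (Qd : ℕ → H) (hQd : ∀ n, T n (Qd n) = Qd n)
    (Q Qhat : ℕ → H)
    (h1 : ∀ n, ‖Qhat n - Qd n‖ ≤ ε)
    (h2 : ∀ n, ‖Qhat n - Q n‖ ≤ Δ₀)
    (h3 : ∀ n, ‖T (n + 1) (Q n) - Tdiam (Q n)‖ ≤ Δ₁)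
    (h4 : ∀ n, ‖T (n + 1) (Qd n) - Qd n‖ ≤ Δ₂) :
    Filter.limsup (fun n => ‖Q n - Qstar‖) Filter.atTop
      ≤ ε + Δ₀ + (2 * β * (Δ₀ + ε) + Δ₁ + Δ₂ / (1 - β)) / (1 - β) := by

  have h1β : 0 < 1 - β := by linarith
  have key : ∀ n, ‖Q n - Qstar‖ ≤ ε + Δ₀ + (2 * β * (Δ₀ + ε) + Δ₁ + Δ₂) / (1 - β) := by
    intro n
    have hQQd : ‖Q n - Qd n‖ ≤ ε + Δ₀ := by
      calc ‖Q n - Qd n‖ ≤ ‖Q n - Qhat n‖ + ‖Qhat n - Qd n‖ :=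
            norm_sub_le_norm_sub_add_norm_sub _ _ _
        _ ≤ Δ₀ + ε := by
            have := h2 n; have := h1 n
            rw [norm_sub_rev]; linarith
        _ = ε + Δ₀ := by ring
    have ha : ‖Q n - Qstar‖ ≤ ε + Δ₀ + ‖Qd n - Qstar‖ := by
      calc ‖Q n - Qstar‖ ≤ ‖Q n - Qd n‖ + ‖Qd n - Qstar‖ :=
            norm_sub_le_norm_sub_add_norm_sub _ _ _
        _ ≤ ε + Δ₀ + ‖Qd n - Qstar‖ := by linarith
    have hb : ‖Qd n - Qstar‖ ≤ Δ₂ + β * (ε + Δ₀) + Δ₁ + β * ‖Q n - Qstar‖ := by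
      calc ‖Qd n - Qstar‖
          ≤ ‖Qd n - T (n+1) (Q n)‖ + ‖T (n+1) (Q n) - Qstar‖ :=
            norm_sub_le_norm_sub_add_norm_sub _ _ _
        _ ≤ (‖Qd n - T (n+1) (Qd n)‖ + ‖T (n+1) (Qd n) - T (n+1) (Q n)‖)
            + (‖T (n+1) (Q n) - Tdiam (Q n)‖ + ‖Tdiam (Q n) - Qstar‖) := by
            gcongr
            · exact norm_sub_le_norm_sub_add_norm_sub _ _ _
            · exact norm_sub_le_norm_sub_add_norm_sub _ _ _
        _ ≤ Δ₂ + β * (ε + Δ₀) + Δ₁ + β * ‖Q n - Qstar‖ := by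
            have e1 : ‖Qd n - T (n+1) (Qd n)‖ ≤ Δ₂ := by rw [norm_sub_rev]; exact h4 n
            have e2 : ‖T (n+1) (Qd n) - T (n+1) (Q n)‖ ≤ β * (ε + Δ₀) := by
              calc ‖T (n+1) (Qd n) - T (n+1) (Q n)‖ ≤ β * ‖Qd n - Q n‖ := hT _ _ _
                _ ≤ β * (ε + Δ₀) := by
                    have : ‖Qd n - Q n‖ ≤ ε + Δ₀ := by rw [norm_sub_rev]; exact hQQd
                    exact mul_le_mul_of_nonneg_left this hβ0.le
            have e3 := h3 n
            have e4 : ‖Tdiam (Q n) - Qstar‖ ≤ β * ‖Q n - Qstar‖ := by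
              calc ‖Tdiam (Q n) - Qstar‖ = ‖Tdiam (Q n) - Tdiam Qstar‖ := by rw [hQstar]
                _ ≤ β * ‖Q n - Qstar‖ := hTdiam _ _
            linarith
    have hba : β * ‖Q n - Qstar‖ ≤ β * (ε + Δ₀ + ‖Qd n - Qstar‖) :=
      mul_le_mul_of_nonneg_left ha hβ0.le
    have hbfin : ‖Qd n - Qstar‖ ≤ (2 * β * (Δ₀ + ε) + Δ₁ + Δ₂) / (1 - β) := by
      rw [le_div_iff₀ h1β]; nlinarith
    linarith
  have hmono : ε + Δ₀ + (2 * β * (Δ₀ + ε) + Δ₁ + Δ₂) / (1 - β)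
      ≤ ε + Δ₀ + (2 * β * (Δ₀ + ε) + Δ₁ + Δ₂ / (1 - β)) / (1 - β) := by
    have h2' : Δ₂ ≤ Δ₂ / (1 - β) := by
      rw [le_div_iff₀ h1β]; nlinarith
    gcongr
  refine le_trans (Filter.limsup_le_of_le ?_ (Filter.Eventually.of_forall key)) hmono
  exact Filter.isCoboundedUnder_le_of_le _ fun n => norm_nonneg _
end

section
/- Let H be a real normed space, β ∈ (0, 1), and ε, Δ₀, Δ₁, Δ₂ > 0. Let T♢ : H → H be β-Lipschitz with fixed point Q⋆ = T♢(Q⋆), and let T′ : H → H be β-Lipschitz with fixed point Q♢′ = T′(Q♢′). Suppose Q, Q̂, Q♢ ∈ H satisfy: ‖Q̂ − Q♢‖ ≤ ε, ‖Q̂ − Q‖ ≤ Δ₀, ‖T′(Q) − T♢(Q)‖ ≤ Δ₁, and ‖T′(Q♢) − Q♢‖ ≤ Δ₂. Then ‖Q♢′ − Q⋆‖ ≤ β‖Q♢ − Q⋆‖ + 2β(Δ₀ + ε) + Δ₁ + Δ₂/(1 − β). -/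
/-- one-step recursive bound between fixed points of successive
β-contractions, cf. the policy-iteration performance analysis. -/
theorem stmt14
    {H : Type*} [NormedAddCommGroup H] [NormedSpace ℝ H]
    (β : ℝ) (hβ0 : 0 < β) (hβ1 : β < 1)
    (ε Δ₀ Δ₁ Δ₂ : ℝ) (hε : 0 < ε) (hΔ₀ : 0 < Δ₀) (hΔ₁ : 0 < Δ₁) (hΔ₂ : 0 < Δ₂)
    (Tdiam : H → H) (hTdiam : ∀ x y : H, ‖Tdiam x - Tdiam y‖ ≤ β * ‖x - y‖)
    (Qstar : H) (hQstar : Tdiam Qstar = Qstar)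
    (T' : H → H) (hT' : ∀ x y : H, ‖T' x - T' y‖ ≤ β * ‖x - y‖)
    (Qd' : H) (hQd' : T' Qd' = Qd')
    (Q Qhat Qd : H)
    (h1 : ‖Qhat - Qd‖ ≤ ε)
    (h2 : ‖Qhat - Q‖ ≤ Δ₀)
    (h3 : ‖T' Q - Tdiam Q‖ ≤ Δ₁)
    (h4 : ‖T' Qd - Qd‖ ≤ Δ₂) :
    ‖Qd' - Qstar‖ ≤ β * ‖Qd - Qstar‖ + 2 * β * (Δ₀ + ε) + Δ₁ + Δ₂ / (1 - β) := by
  have h1β : (0:ℝ) < 1 - β := by linarith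
  -- bound ‖Qd' - Qd‖ ≤ Δ₂ / (1 - β)
  have hA : ‖Qd' - Qd‖ ≤ Δ₂ / (1 - β) := by
    have e1 : ‖Qd' - Qd‖ ≤ ‖T' Qd' - T' Qd‖ + ‖T' Qd - Qd‖ := by
      calc ‖Qd' - Qd‖ = ‖(T' Qd' - T' Qd) + (T' Qd - Qd)‖ := by rw [hQd']; abel_nf
        _ ≤ ‖T' Qd' - T' Qd‖ + ‖T' Qd - Qd‖ := norm_add_le _ _
    have e2 := hT' Qd' Qd
    rw [le_div_iff₀ h1β]
    nlinarith
  have hQQd : ‖Q - Qd‖ ≤ Δ₀ + ε := by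
    calc ‖Q - Qd‖ = ‖-(Qhat - Q) + (Qhat - Qd)‖ := by abel_nf
      _ ≤ ‖-(Qhat - Q)‖ + ‖Qhat - Qd‖ := norm_add_le _ _
      _ ≤ Δ₀ + ε := by rw [norm_neg]; linarith
  have hB : ‖Qd' - T' Q‖ ≤ β * (Δ₂ / (1 - β) + (Δ₀ + ε)) := by
    have e2 := hT' Qd' Q
    have e3 : ‖Qd' - Q‖ ≤ ‖Qd' - Qd‖ + ‖Qd - Q‖ := norm_sub_le_norm_sub_add_norm_sub _ _ _
    have e4 : ‖Qd - Q‖ = ‖Q - Qd‖ := norm_sub_rev _ _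
    calc ‖Qd' - T' Q‖ = ‖T' Qd' - T' Q‖ := by rw [hQd']
      _ ≤ β * ‖Qd' - Q‖ := e2
      _ ≤ β * (Δ₂ / (1 - β) + (Δ₀ + ε)) := by
          apply mul_le_mul_of_nonneg_left _ hβ0.le
          rw [e4] at e3; linarith
  have hC : ‖Tdiam Q - Qstar‖ ≤ β * (Δ₀ + ε + ‖Qd - Qstar‖) := by
    have e2 := hTdiam Q Qstar
    rw [hQstar] at e2
    have e3 : ‖Q - Qstar‖ ≤ ‖Q - Qd‖ + ‖Qd - Qstar‖ := norm_sub_le_norm_sub_add_norm_sub _ _ _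
    calc ‖Tdiam Q - Qstar‖ ≤ β * ‖Q - Qstar‖ := e2
      _ ≤ β * (Δ₀ + ε + ‖Qd - Qstar‖) := by
          apply mul_le_mul_of_nonneg_left _ hβ0.le; linarith
  have tri : ‖Qd' - Qstar‖ ≤ ‖Qd' - T' Q‖ + ‖T' Q - Tdiam Q‖ + ‖Tdiam Q - Qstar‖ := by
    calc ‖Qd' - Qstar‖ = ‖(Qd' - T' Q) + (T' Q - Tdiam Q) + (Tdiam Q - Qstar)‖ := by abel_nf
      _ ≤ _ := norm_add₃_le
  have hβd : β * (Δ₂ / (1 - β)) ≤ Δ₂ / (1 - β) := by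
    have : 0 ≤ Δ₂ / (1 - β) := by positivity
    nlinarith
  linarith
end

section
/- Let (Ω, ℱ, ℙ) be a probability space, D a positive integer, v : Ω → ℝ^D a measurable random vector, and u : Ω → ℝ a random variable that is uniformly distributed on the interval [0, 2π) and independent of v. Then for all z, z′ ∈ ℝ^D, 𝔼[cos(⟪v, z⟫ + u) · cos(⟪v, z′⟫ + u)] = (1/2) · 𝔼[cos(⟪v, z − z′⟫)], where ⟪·,·⟫ is the Euclidean inner product on ℝ^D. -/
open MeasureTheory
open scoped RealInnerProductSpace

private lemma cos_prod (x y : ℝ) :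
    Real.cos x * Real.cos y = (Real.cos (x + y) + Real.cos (x - y)) / 2 := by
  rw [Real.cos_add, Real.cos_sub]; ring

private lemma integrable_of_abs_le_one {Ω : Type*} [MeasurableSpace Ω] (ℙ : Measure Ω)
    [IsProbabilityMeasure ℙ] {f : Ω → ℝ} (hf : Measurable f) (h : ∀ ω, |f ω| ≤ 1) :
    Integrable f ℙ :=
  (integrable_const 1).mono' hf.aestronglyMeasurable (Filter.Eventually.of_forall h)

/-- the random-Fourier-features phase-averaging identity. -/
theorem stmt16
    {Ω : Type*} [MeasurableSpace Ω] (ℙ : Measure Ω) [IsProbabilityMeasure ℙ]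
    {D : ℕ} (hD : 0 < D)
    (v : Ω → EuclideanSpace ℝ (Fin D)) (hv : Measurable v)
    (u : Ω → ℝ) (hu : Measurable u)
    (huLaw : Measure.map u ℙ
      = (ENNReal.ofReal (2 * Real.pi))⁻¹
          • volume.restrict (Set.Ico (0 : ℝ) (2 * Real.pi)))
    (hindep : ProbabilityTheory.IndepFun v u ℙ) :
    ∀ z z' : EuclideanSpace ℝ (Fin D),
      (∫ ω, Real.cos (⟪v ω, z⟫ + u ω) * Real.cos (⟪v ω, z'⟫ + u ω) ∂ℙ)
        = (1 / 2) * ∫ ω, Real.cos ⟪v ω, z - z'⟫ ∂ℙ := by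
  intro z z'
  have pi_pos := Real.pi_pos
  have h2pi : (0:ℝ) < 2 * Real.pi := by positivity
  have hmc : ∀ w : EuclideanSpace ℝ (Fin D),
      Measurable fun x : EuclideanSpace ℝ (Fin D) => ⟪x, w⟫ :=
    fun w => (continuous_id.inner continuous_const).measurable
  -- law of u applied to a bounded measurable g
  have key : ∀ g : ℝ → ℝ, Measurable g →
      (∫ ω, g (u ω) ∂ℙ) = (2 * Real.pi)⁻¹ * ∫ x in (0:ℝ)..(2 * Real.pi), g x := by
    intro g hg
    rw [← integral_map hu.aemeasurable hg.aestronglyMeasurable, huLaw,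
      integral_smul_measure, ENNReal.toReal_inv, ENNReal.toReal_ofReal h2pi.le,
      intervalIntegral.integral_of_le h2pi.le,
      MeasureTheory.restrict_Ico_eq_restrict_Ioc, smul_eq_mul]
  -- E[cos (2u)] = 0
  have Ecos2u : (∫ ω, Real.cos (2 * u ω) ∂ℙ) = 0 := by
    rw [key (fun x => Real.cos (2 * x)) (by fun_prop),
      intervalIntegral.integral_comp_mul_left Real.cos two_ne_zero, integral_cos]
    have h4 : (2:ℝ) * (2 * Real.pi) = (4:ℕ) * Real.pi := by push_cast; ring
    rw [mul_zero, Real.sin_zero, h4, Real.sin_nat_mul_pi]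
    simp
  -- E[sin (2u)] = 0
  have Esin2u : (∫ ω, Real.sin (2 * u ω) ∂ℙ) = 0 := by
    rw [key (fun x => Real.sin (2 * x)) (by fun_prop),
      intervalIntegral.integral_comp_mul_left Real.sin two_ne_zero, integral_sin]
    have h4 : (2:ℝ) * (2 * Real.pi) = (2:ℕ) * (2 * Real.pi) := by push_cast; ring
    rw [mul_zero, Real.cos_zero, h4, Real.cos_nat_mul_two_pi]
    simp
  -- the cross term vanishes
  have hmcc : Measurable fun ω => ⟪v ω, z + z'⟫ := (hmc (z + z')).comp hv
  have hzero : (∫ ω, Real.cos (⟪v ω, z + z'⟫ + 2 * u ω) ∂ℙ) = 0 := by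
    have hpt : ∀ ω, Real.cos (⟪v ω, z + z'⟫ + 2 * u ω)
        = Real.cos ⟪v ω, z + z'⟫ * Real.cos (2 * u ω)
          - Real.sin ⟪v ω, z + z'⟫ * Real.sin (2 * u ω) :=
      fun ω => Real.cos_add _ _
    have int1 : Integrable (fun ω => Real.cos ⟪v ω, z + z'⟫ * Real.cos (2 * u ω)) ℙ := by
      refine integrable_of_abs_le_one ℙ (by fun_prop) fun ω => ?_
      rw [abs_mul]
      exact mul_le_one₀ (Real.abs_cos_le_one _) (abs_nonneg _) (Real.abs_cos_le_one _)
    have int2 : Integrable (fun ω => Real.sin ⟪v ω, z + z'⟫ * Real.sin (2 * u ω)) ℙ := by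
      refine integrable_of_abs_le_one ℙ (by fun_prop) fun ω => ?_
      rw [abs_mul]
      exact mul_le_one₀ (Real.abs_sin_le_one _) (abs_nonneg _) (Real.abs_sin_le_one _)
    have indep1 : ProbabilityTheory.IndepFun
        ((fun x : EuclideanSpace ℝ (Fin D) => Real.cos ⟪x, z + z'⟫) ∘ v)
        ((fun x : ℝ => Real.cos (2 * x)) ∘ u) ℙ :=
      hindep.comp (Real.measurable_cos.comp (hmc (z + z'))) (by fun_prop)
    have indep2 : ProbabilityTheory.IndepFun
        ((fun x : EuclideanSpace ℝ (Fin D) => Real.sin ⟪x, z + z'⟫) ∘ v)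
        ((fun x : ℝ => Real.sin (2 * x)) ∘ u) ℙ :=
      hindep.comp (Real.measurable_sin.comp (hmc (z + z'))) (by fun_prop)
    have e1 := indep1.integral_fun_mul_eq_mul_integral
      ((Real.measurable_cos.comp hmcc).aestronglyMeasurable)
      ((Real.measurable_cos.comp (hu.const_mul 2)).aestronglyMeasurable)
    have e2 := indep2.integral_fun_mul_eq_mul_integral
      ((Real.measurable_sin.comp hmcc).aestronglyMeasurable)
      ((Real.measurable_sin.comp (hu.const_mul 2)).aestronglyMeasurable)
    simp only [Function.comp_def] at e1 e2
    simp_rw [hpt]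
    rw [integral_sub int1 int2, e1, e2, Ecos2u, Esin2u]
    ring
  -- pointwise product-to-sum
  have hpt : ∀ ω, Real.cos (⟪v ω, z⟫ + u ω) * Real.cos (⟪v ω, z'⟫ + u ω)
      = (Real.cos (⟪v ω, z + z'⟫ + 2 * u ω) + Real.cos ⟪v ω, z - z'⟫) / 2 := by
    intro ω
    rw [cos_prod]
    congr 2
    · rw [inner_add_right]; ring
    · rw [inner_sub_right]; ring
  have intA : Integrable (fun ω => Real.cos (⟪v ω, z + z'⟫ + 2 * u ω)) ℙ :=
    integrable_of_abs_le_one ℙ (by fun_prop) fun ω => Real.abs_cos_le_one _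
  have intB : Integrable (fun ω => Real.cos ⟪v ω, z - z'⟫) ℙ :=
    integrable_of_abs_le_one ℙ (Real.measurable_cos.comp ((hmc (z - z')).comp hv))
      fun ω => Real.abs_cos_le_one _
  simp_rw [hpt]
  rw [integral_div, integral_add intA intB, hzero, zero_add]
  ring
end
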